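/- arXiv:1704.06350 — 2 statements merged into one kernel-verified Lean document; each statement's English description precedes it below -/
import Mathlib

section
/- Let a, b, c, d be nonnegative integers with a + b = c + d. The permanent of the (a+b)×(c+d) block matrix whose top-left a×c block is all -1, top-right a×d block is all 1, bottom-left b×c block is all 1, and bottom-right b×d block is all -1, equals (a+b)! · (-1)^(a+d). -/
/-- The permanent of a square matrix. -/
def perm {n : ℕ} {R : Type*} [CommRing R] (M : Matrix (Fin n) (Fin n) R) : R :=
  ∑ σ : Equiv.Perm (Fin n), ∏ i, M i (σ i)

lemma prod_ite_lt (n c : ℕ) (hc : c ≤ n) :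
    ∏ i : Fin n, (if (i : ℕ) < c then (-1 : ℤ) else 1) = (-1) ^ c := by
  rw [Finset.prod_ite (fun _ => (-1:ℤ)) (fun _ => (1:ℤ))]
  simp only [Finset.prod_const, one_pow, mul_one]
  congr 1
  have : (Finset.univ.filter fun i : Fin n => (i : ℕ) < c) =
      (Finset.range c).attachFin (fun m hm => lt_of_lt_of_le (Finset.mem_range.mp hm) hc) := by
    ext i
    simp [Finset.mem_attachFin]
  rw [this, Finset.card_attachFin, Finset.card_range]

/-- For `a + b = c + d`, the permanent of the block matrix with top-left `a×c` block
all `-1`, top-right `a×d` block all `1`, bottom-left `b×c` block all `1`, and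
bottom-right `b×d` block all `-1` equals `(a+b)! * (-1)^(a+d)`. -/
theorem perm_pm_one_blocks (a b c d : ℕ) (h : a + b = c + d) :
    perm (Matrix.of fun (i j : Fin (a + b)) =>
      if ((i : ℕ) < a ↔ (j : ℕ) < c) then (-1 : ℤ) else 1) =
      (a + b).factorial * (-1) ^ (a + d) := by
  unfold perm
  have key : ∀ σ : Equiv.Perm (Fin (a + b)),
      (∏ i : Fin (a+b), (if ((i : ℕ) < a ↔ ((σ i).val) < c) then (-1 : ℤ) else 1))
        = (-1) ^ (a + d) := by
    intro σ
    have step : ∀ i : Fin (a + b),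
        (if ((i : ℕ) < a ↔ ((σ i).val) < c) then (-1 : ℤ) else 1)
        = -((if (i : ℕ) < a then (-1 : ℤ) else 1) *
            (if ((σ i).val) < c then (-1 : ℤ) else 1)) := by
      intro i
      by_cases h1 : (i : ℕ) < a <;> by_cases h2 : ((σ i).val) < c <;>
        simp [h1, h2]
    rw [Finset.prod_congr rfl fun i _ => step i]
    have : ∏ i : Fin (a+b), -((if (i : ℕ) < a then (-1 : ℤ) else 1) *
            (if ((σ i).val) < c then (-1 : ℤ) else 1))
        = (-1) ^ (a + b) * ((∏ i : Fin (a+b), (if (i : ℕ) < a then (-1 : ℤ) else 1)) *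
            ∏ i : Fin (a+b), (if ((σ i).val) < c then (-1 : ℤ) else 1)) := by
      have e : ∀ i : Fin (a+b), -((if (i : ℕ) < a then (-1 : ℤ) else 1) *
            (if ((σ i).val) < c then (-1 : ℤ) else 1))
          = (-1) * ((if (i : ℕ) < a then (-1 : ℤ) else 1) *
            (if ((σ i).val) < c then (-1 : ℤ) else 1)) := fun i => (neg_one_mul _).symm
      rw [Finset.prod_congr rfl fun i _ => e i, Finset.prod_mul_distrib,
        Finset.prod_mul_distrib, Finset.prod_const, Finset.card_univ, Fintype.card_fin]
    rw [this]
    have h2 : (∏ i : Fin (a+b), (if ((σ i).val) < c then (-1 : ℤ) else 1))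
        = ∏ j : Fin (a+b), (if (j : ℕ) < c then (-1 : ℤ) else 1) :=
      Equiv.prod_comp σ (fun j : Fin (a+b) => if (j : ℕ) < c then (-1:ℤ) else 1)
    rw [h2, prod_ite_lt (a+b) a (by omega), prod_ite_lt (a+b) c (by omega),
      ← pow_add, ← pow_add]
    rcases Nat.even_or_odd (a + d) with hp | hp
    · rw [Even.neg_one_pow hp, Even.neg_one_pow (by rw [Nat.even_iff] at hp ⊢; omega)]
    · rw [Odd.neg_one_pow hp, Odd.neg_one_pow (by rw [Nat.odd_iff] at hp ⊢; omega)]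
  simp only [Matrix.of_apply]
  rw [Finset.sum_congr rfl fun σ _ => key σ, Finset.sum_const, Finset.card_univ,
    Fintype.card_perm, Fintype.card_fin, nsmul_eq_mul]
end

section
/- For a prime p = n+1 and a tree T with at least 2 vertices whose reduced signed incidence matrix is M_T (delete the row of one chosen leaf vertex from the signed incidence matrix), the permanent of the Kronecker product 1_n ⊗ M_T is congruent to (−1)^{|V(T)|−1} modulo p. -/
open Finset

def permB {ι κ : Type*} [Fintype ι] [Fintype κ] [DecidableEq ι] [DecidableEq κ]
    {R : Type*} [CommRing R] (M : Matrix ι κ R) : R :=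
  ∑ σ : ι ≃ κ, ∏ i, M i (σ i)

theorem sum_supersets {κ : Type*} [Fintype κ] [DecidableEq κ] {R : Type*} [CommRing R]
    (T : Finset κ) :
    (∑ S : Finset κ, if T ⊆ S then ((-1 : R)) ^ (Sᶜ.card) else 0) =
      if T = univ then 1 else 0 := by
  rw [← Fintype.sum_bijective compl (compl_involutive.bijective)
      (fun X : Finset κ => if T ⊆ Xᶜ then ((-1 : R)) ^ (Xᶜᶜ.card) else 0) _ (fun X => rfl)]
  simp only [compl_compl]
  calc (∑ X : Finset κ, if T ⊆ Xᶜ then ((-1:R)) ^ X.card else 0)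
      = ∑ X ∈ univ.filter (fun X : Finset κ => T ⊆ Xᶜ), ((-1:R)) ^ X.card := by
        rw [Finset.sum_filter]
    _ = ∑ X ∈ Tᶜ.powerset, ((-1:R)) ^ X.card := by
        congr 1
        ext X
        simp only [Finset.mem_filter, Finset.mem_univ, true_and, Finset.mem_powerset]
        exact Finset.subset_compl_comm
    _ = (((∑ X ∈ Tᶜ.powerset, (-1:ℤ) ^ X.card) : ℤ) : R) := by push_cast; rfl
    _ = if T = univ then 1 else 0 := by
        rw [Finset.sum_powerset_neg_one_pow_card]
        by_cases h : T = univ <;> simp [h, Finset.compl_eq_empty_iff]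

theorem ryser {ι κ : Type*} [Fintype ι] [Fintype κ] [DecidableEq ι] [DecidableEq κ]
    {R : Type*} [CommRing R] (h : Fintype.card ι = Fintype.card κ) (A : Matrix ι κ R) :
    ∑ S : Finset κ, ((-1 :R)) ^ (Fintype.card κ - S.card) * ∏ i, ∑ j ∈ S, A i j = permB A := by
  have key : ∀ S : Finset κ, (∏ i, ∑ j ∈ S, A i j) =
      ∑ f : ι → κ, if (∀ i, f i ∈ S) then ∏ i, A i (f i) else 0 := by
    intro S
    rw [Finset.prod_univ_sum (fun _ => S) (fun i j => A i j), ← Finset.sum_filter]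
    congr 1
    ext f
    simp [Fintype.mem_piFinset]
  calc (∑ S : Finset κ, (-1:R) ^ (Fintype.card κ - S.card) * ∏ i, ∑ j ∈ S, A i j)
      = ∑ S : Finset κ, ∑ f : ι → κ,
          if (∀ i, f i ∈ S) then (-1:R) ^ (Sᶜ.card) * ∏ i, A i (f i) else 0 := by
        refine Finset.sum_congr rfl fun S _ => ?_
        rw [key S, Finset.mul_sum, Finset.card_compl]
        refine Finset.sum_congr rfl fun f _ => ?_
        by_cases hf : ∀ i, f i ∈ S <;> simp [hf]
    _ = ∑ f : ι → κ, (∑ S : Finset κ,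
          if (Finset.image f univ) ⊆ S then (-1:R) ^ (Sᶜ.card) else 0) * ∏ i, A i (f i) := by
        rw [Finset.sum_comm]
        refine Finset.sum_congr rfl fun f _ => ?_
        rw [Finset.sum_mul]
        refine Finset.sum_congr rfl fun S _ => ?_
        have : (Finset.image f univ ⊆ S) ↔ ∀ i, f i ∈ S := by
          simp [Finset.image_subset_iff]
        by_cases hf : ∀ i, f i ∈ S <;> simp [hf, this]
    _ = ∑ f : ι → κ, (if Function.Surjective f then 1 else 0) * ∏ i, A i (f i) := by
        refine Finset.sum_congr rfl fun f _ => ?_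
        rw [sum_supersets]
        have himg : (Finset.image f univ = univ) ↔ Function.Surjective f := by
          constructor
          · intro hu b; have : b ∈ Finset.image f univ := hu ▸ Finset.mem_univ b
            simpa using this
          · intro hs; ext b; simpa using hs b
        rw [if_congr himg rfl rfl]
    _ = ∑ f ∈ univ.filter (fun f : ι → κ => Function.Surjective f), ∏ i, A i (f i) := by
        rw [Finset.sum_filter]
        refine Finset.sum_congr rfl fun f _ => ?_
        by_cases hf : Function.Surjective f <;> simp [hf]
    _ = permB A := by
        refine Eq.symm ?_
        rw [permB.eq_1]
        refine (Finset.sum_bij (fun (σ : ι ≃ κ) _ => (σ : ι → κ)) ?_ ?_ ?_ ?_)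
        · intro σ _; simp [Finset.mem_filter, σ.surjective]
        · intro σ _ τ _ hst
          ext x; exact congrFun hst x
        · intro f hf
          simp only [Finset.mem_filter, Finset.mem_univ, true_and] at hf
          have hb : Function.Bijective f :=
            (Fintype.bijective_iff_surjective_and_card f).2 ⟨hf, h⟩
          exact ⟨Equiv.ofBijective f hb, Finset.mem_univ _, rfl⟩
        · intro σ _; rfl

/-- The finset of pairs associated to a family of finsets. -/
def pairFinset {γ β : Type*} [Fintype γ] [Fintype β] [DecidableEq γ] [DecidableEq β]
    (F : β → Finset γ) : Finset (γ × β) :=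
  univ.filter (fun x => x.1 ∈ F x.2)

theorem sum_pairFinset {γ β : Type*} [Fintype γ] [Fintype β] [DecidableEq γ] [DecidableEq β]
    {R : Type*} [AddCommMonoid R] (F : β → Finset γ) (h : γ × β → R) :
    ∑ x ∈ pairFinset F, h x = ∑ b, ∑ g ∈ F b, h (g, b) := by
  rw [pairFinset, Finset.sum_filter, Fintype.sum_prod_type_right]
  refine Finset.sum_congr rfl fun b _ => ?_
  rw [← Finset.sum_filter]
  congr 1
  ext g; simp

theorem card_pairFinset {γ β : Type*} [Fintype γ] [Fintype β] [DecidableEq γ] [DecidableEq β]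
    (F : β → Finset γ) : (pairFinset F).card = ∑ b, (F b).card := by
  rw [Finset.card_eq_sum_ones, sum_pairFinset F (fun _ => (1 : ℕ))]
  exact Finset.sum_congr rfl fun b _ => (Finset.card_eq_sum_ones _).symm

theorem pairFinset_bijective {γ β : Type*} [Fintype γ] [Fintype β] [DecidableEq γ]
    [DecidableEq β] : Function.Bijective (pairFinset (γ := γ) (β := β)) := by
  constructor
  · intro F F' hFF
    funext b; ext g
    have : ((g, b) ∈ pairFinset F) ↔ ((g, b) ∈ pairFinset F') := by rw [hFF]
    simpa [pairFinset] using this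
  · intro S
    refine ⟨fun b => univ.filter (fun g => (g, b) ∈ S), ?_⟩
    ext ⟨g, b⟩
    simp [pairFinset]
open Finset

theorem zmod_choose {n : ℕ} (hp : Nat.Prime (n + 1)) :
    ∀ k, k ≤ n → ((n.choose k : ZMod (n + 1))) = (-1) ^ k := by
  intro k
  induction k with
  | zero => simp
  | succ k ih =>
    intro hk
    have hk' : k ≤ n := le_of_lt (Nat.lt_of_lt_of_le (Nat.lt_succ_self k) hk)
    have hdvd : (n + 1) ∣ (n + 1).choose (k + 1) :=
      hp.dvd_choose_self (Nat.succ_ne_zero k) (Nat.lt_succ_of_le hk)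
    have h0 : (((n + 1).choose (k + 1) : ℕ) : ZMod (n + 1)) = 0 :=
      (ZMod.natCast_eq_zero_iff _ _).2 hdvd
    rw [Nat.choose_succ_succ] at h0
    push_cast at h0
    rw [ih hk'] at h0
    have h1 : ((n.choose (k + 1) : ZMod (n + 1))) = -(-1) ^ k := by linear_combination h0
    rw [h1, pow_succ]
    ring

theorem coord_sum {n : ℕ} (hp : Nat.Prime (n + 1)) (c : ZMod (n + 1)) :
    ∑ A ∈ univ.filter (fun A : Finset (Fin n) => ((A.card : ZMod (n + 1)) = c)),
      ((-1 : ZMod (n + 1))) ^ (n - A.card) = 1 := by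
  haveI : Fact (Nat.Prime (n + 1)) := ⟨hp⟩
  haveI : NeZero (n + 1) := ⟨Nat.succ_ne_zero n⟩
  have hval : c.val ≤ n := Nat.lt_succ_iff.1 (ZMod.val_lt c)
  have hfilter : univ.filter (fun A : Finset (Fin n) => ((A.card : ZMod (n + 1)) = c)) =
      Finset.powersetCard c.val univ := by
    ext A
    simp only [mem_filter, mem_univ, true_and, Finset.mem_powersetCard_univ]
    constructor
    · intro h
      have hle : A.card < n + 1 := by
        have := Finset.card_le_univ A
        simp only [Finset.card_univ, Fintype.card_fin] at this
        omega
      calc A.card = ((A.card : ZMod (n + 1))).val := (ZMod.val_cast_of_lt hle).symm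
        _ = c.val := by rw [h]
    · intro h; rw [h]; exact ZMod.natCast_rightInverse c
  rw [hfilter]
  have hcongr : ∀ A ∈ Finset.powersetCard c.val (univ : Finset (Fin n)),
      ((-1 : ZMod (n + 1))) ^ (n - A.card) = (-1) ^ (n - c.val) := by
    intro A hA; rw [Finset.mem_powersetCard_univ.1 hA]
  rw [Finset.sum_congr rfl hcongr, Finset.sum_const, Finset.card_powersetCard,
    Finset.card_univ, Fintype.card_fin, nsmul_eq_mul, zmod_choose hp c.val hval,
    ← pow_add, Nat.add_sub_cancel' hval]
  have hne : (-1 : ZMod (n + 1)) ≠ 0 := by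
    intro h
    have h1 : (1 : ZMod (n + 1)) = 0 := by linear_combination -h
    exact one_ne_zero h1
  have := ZMod.pow_card_sub_one_eq_one hne
  simpa using this
open Finset SimpleGraph

section Graph
variable {V : Type*} [DecidableEq V] (G : SimpleGraph V) [Fintype G.edgeSet]
variable (tail head : G.edgeSet → V)
variable {R : Type*} [CommRing R]

/-- The edge of a dart as an element of the edge set. -/
def dartE (d : G.Dart) : G.edgeSet := ⟨d.edge, d.edge_mem⟩

/-- The full signed incidence matrix. -/
def Mfull (v : V) (e : G.edgeSet) : R :=
  (if v = tail e then 1 else 0) - (if v = head e then 1 else 0)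

/-- The sign of a dart relative to the chosen orientation. -/
def sgn (d : G.Dart) : R := if head (dartE G d) = d.toProd.2 then -1 else 1

theorem step_eq (hor : ∀ e : G.edgeSet, (e : Sym2 V) = s(tail e, head e))
    (u : V) (d : G.Dart) :
    sgn G head d * Mfull G tail head u (dartE G d) =
      ((if u = d.toProd.2 then 1 else 0) - (if u = d.toProd.1 then 1 else 0) : R) := by
  have hne : d.toProd.1 ≠ d.toProd.2 := d.adj.ne
  have he : s(tail (dartE G d), head (dartE G d)) = s(d.toProd.1, d.toProd.2) := by
    rw [← hor (dartE G d)]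
    rfl
  rw [Sym2.eq_iff] at he
  rcases he with ⟨h1, h2⟩ | ⟨h1, h2⟩
  · simp only [sgn, Mfull, h1, h2, eq_self_iff_true, if_true]
    ring
  · simp only [sgn, Mfull, h1, h2]
    rw [if_neg (h2 ▸ hne)]
    ring

theorem telescope (hor : ∀ e : G.edgeSet, (e : Sym2 V) = s(tail e, head e))
    (u : V) {a b : V} (w : G.Walk a b) :
    ((w.darts.map (fun d => sgn G head d * Mfull G tail head u (dartE G d))).sum : R)
      = (if u = b then 1 else 0) - (if u = a then 1 else 0) := by
  induction w with
  | nil => simp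
  | cons h p ih =>
    simp only [SimpleGraph.Walk.darts_cons, List.map_cons, List.sum_cons]
    rw [step_eq G tail head hor, ih]
    dsimp only
    ring

theorem list_swap (u : V) (L : List G.Dart) :
    ∑ e : G.edgeSet, Mfull G tail head u e *
        ((L.map (fun d => if dartE G d = e then sgn G head d else (0 : R))).sum)
      = (L.map (fun d => sgn G head d * Mfull G tail head u (dartE G d))).sum := by
  induction L with
  | nil => simp
  | cons d L ih =>
    simp only [List.map_cons, List.sum_cons, mul_add, Finset.sum_add_distrib]
    rw [ih]
    congr 1
    simp only [mul_ite, mul_zero]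
    rw [Finset.sum_ite_eq]
    simp [mul_comm]

end Graph
open Finset SimpleGraph

theorem main_aux {V : Type*} [Fintype V] [DecidableEq V]
    (G : SimpleGraph V) [DecidableRel G.Adj] [Fintype G.edgeSet]
    (hT : G.IsTree)
    (n : ℕ) (hp : Nat.Prime (n + 1))
    (tail head : G.edgeSet → V)
    (hor : ∀ e : G.edgeSet, (e : Sym2 V) = s(tail e, head e))
    (v0 : V) :
    permB (Matrix.of fun (p : Fin n × {u : V // u ≠ v0}) (q : Fin n × G.edgeSet) =>
        (if (p.2 : V) = tail q.2 then (1 : ZMod (n + 1))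
          else if (p.2 : V) = head q.2 then -1 else 0)) =
      (-1) ^ (Fintype.card V - 1) := by
  classical
  haveI : Fact (Nat.Prime (n + 1)) := ⟨hp⟩
  haveI : NeZero (n + 1) := ⟨Nat.succ_ne_zero n⟩
  -- cardinalities
  have h1 : G.edgeFinset.card + 1 = Fintype.card V := hT.card_edgeFinset
  have h2 : G.edgeFinset.card = Fintype.card G.edgeSet := Set.toFinset_card _
  have hE : Fintype.card G.edgeSet = Fintype.card V - 1 := by omega
  have hU : Fintype.card {u : V // u ≠ v0} = Fintype.card V - 1 := by
    have h3 := Fintype.card_subtype_compl (fun u : V => u = v0)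
    rw [Fintype.card_subtype_eq] at h3
    exact h3
  have hcards : Fintype.card (Fin n × {u : V // u ≠ v0}) =
      Fintype.card (Fin n × G.edgeSet) := by
    simp [Fintype.card_prod, hU, hE]
  -- entries are the full incidence matrix
  have hM : ∀ (u : {u : V // u ≠ v0}) (e : G.edgeSet),
      (if (u : V) = tail e then (1 : ZMod (n + 1))
        else if (u : V) = head e then -1 else 0) = Mfull G tail head (u : V) e := by
    intro u e
    have hmem : (e : Sym2 V) ∈ G.edgeSet := e.2
    rw [hor e] at hmem
    have hne : tail e ≠ head e := (G.mem_edgeSet.1 hmem).ne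
    rw [Mfull]
    by_cases ha : (u : V) = tail e
    · rw [if_pos ha, if_pos ha, if_neg (fun hb => hne (ha.symm.trans hb))]
      ring
    · rw [if_neg ha, if_neg ha]
      by_cases hb : (u : V) = head e <;> simp [hb]
  -- right inverse via paths
  have hreach : ∀ u : V, G.Reachable v0 u := fun u => hT.isConnected.preconnected v0 u
  set N : G.edgeSet → {u : V // u ≠ v0} → ZMod (n + 1) := fun e u' =>
    (((hreach (u' : V)).some.darts.map
      (fun d => if dartE G d = e then sgn G head d else 0)).sum) with hN
  have hMN : ∀ u u' : {u : V // u ≠ v0},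
      (∑ e : G.edgeSet, Mfull G tail head (u : V) e * N e u') =
        if u = u' then 1 else 0 := by
    intro u u'
    rw [hN]
    rw [list_swap G tail head (u : V) ((hreach (u' : V)).some.darts),
      telescope G tail head hor (u : V) ((hreach (u' : V)).some)]
    rw [if_neg u.2, sub_zero]
    exact if_congr Subtype.coe_inj rfl rfl
  -- surjectivity and bijectivity of the incidence map
  have hsurj : Function.Surjective
      (fun (z : G.edgeSet → ZMod (n + 1)) => fun (u : {u : V // u ≠ v0}) =>
        ∑ e, z e * Mfull G tail head (u : V) e) := by
    intro d
    refine ⟨fun e => ∑ u', N e u' * d u', ?_⟩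
    funext u
    show (∑ e, (∑ u', N e u' * d u') * Mfull G tail head (u : V) e) = d u
    have hstep : ∀ e : G.edgeSet, (∑ u', N e u' * d u') * Mfull G tail head (u : V) e
        = ∑ u', Mfull G tail head (u : V) e * N e u' * d u' := by
      intro e
      rw [Finset.sum_mul]
      exact Finset.sum_congr rfl fun u' _ => by ring
    rw [Finset.sum_congr rfl fun e _ => hstep e, Finset.sum_comm]
    have hinner : ∀ u' : {u : V // u ≠ v0},
        (∑ e, Mfull G tail head (u : V) e * N e u' * d u')
          = (if u = u' then 1 else 0) * d u' := by
      intro u'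
      rw [← Finset.sum_mul, hMN u u']
    rw [Finset.sum_congr rfl fun u' _ => hinner u']
    simp [Finset.sum_ite_eq]
  have hbij : Function.Bijective
      (fun (z : G.edgeSet → ZMod (n + 1)) => fun (u : {u : V // u ≠ v0}) =>
        ∑ e, z e * Mfull G tail head (u : V) e) := by
    refine (Fintype.bijective_iff_surjective_and_card _).2 ⟨hsurj, ?_⟩
    simp [Fintype.card_fun, hU, hE]
  -- the count of nonvanishing vectors
  have hcnt : Fintype.card {z : G.edgeSet → ZMod (n + 1) //
      ∀ u : {u : V // u ≠ v0}, (∑ e, z e * Mfull G tail head (u : V) e) ≠ 0}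
        = n ^ (Fintype.card V - 1) := by
    have e1 := Equiv.subtypeEquiv (p := fun z : G.edgeSet → ZMod (n + 1) =>
        ∀ u : {u : V // u ≠ v0}, (∑ e, z e * Mfull G tail head (u : V) e) ≠ 0)
      (q := fun d : {u : V // u ≠ v0} → ZMod (n + 1) => ∀ u, d u ≠ 0)
      (Equiv.ofBijective _ hbij) (fun z => Iff.rfl)
    rw [Fintype.card_congr e1, Fintype.card_congr (Equiv.subtypePiEquivPi
      (p := fun (_ : {u : V // u ≠ v0}) (x : ZMod (n + 1)) => x ≠ 0)), Fintype.card_pi]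
    have hcard0 : Fintype.card {x : ZMod (n + 1) // x ≠ 0} = n := by
      have h4 := Fintype.card_subtype_compl (fun x : ZMod (n + 1) => x = 0)
      rw [Fintype.card_subtype_eq, ZMod.card] at h4
      simpa using h4
    simp [hcard0, hU]
  -- main computation
  have hn1 : 1 ≤ n := Nat.succ_le_succ_iff.mp hp.two_le
  calc permB (Matrix.of fun (p : Fin n × {u : V // u ≠ v0}) (q : Fin n × G.edgeSet) =>
        (if (p.2 : V) = tail q.2 then (1 : ZMod (n + 1))
          else if (p.2 : V) = head q.2 then -1 else 0))
      = ∑ S : Finset (Fin n × G.edgeSet),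
          (-1 : ZMod (n + 1)) ^ (Fintype.card (Fin n × G.edgeSet) - S.card) *
          ∏ i : Fin n × {u : V // u ≠ v0}, ∑ j ∈ S,
            (if ((i.2 : V)) = tail j.2 then (1 : ZMod (n + 1))
              else if ((i.2 : V)) = head j.2 then -1 else 0) := (ryser hcards _).symm
    _ = ∑ Fam : G.edgeSet → Finset (Fin n),
          (-1 : ZMod (n + 1)) ^ (Fintype.card (Fin n × G.edgeSet) - (pairFinset Fam).card) *
          ∏ i : Fin n × {u : V // u ≠ v0}, ∑ j ∈ pairFinset Fam,
            (if ((i.2 : V)) = tail j.2 then (1 : ZMod (n + 1))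
              else if ((i.2 : V)) = head j.2 then -1 else 0) :=
        (Fintype.sum_bijective pairFinset pairFinset_bijective _ _ (fun Fam => rfl)).symm
    _ = ∑ Fam : G.edgeSet → Finset (Fin n),
          (∏ e, (-1 : ZMod (n + 1)) ^ (n - (Fam e).card)) *
          ∏ u : {u : V // u ≠ v0},
            (∑ e, ((Fam e).card : ZMod (n + 1)) * Mfull G tail head (u : V) e) ^ n := by
        refine Finset.sum_congr rfl fun Fam _ => ?_
        have hle : ∀ e, (Fam e).card ≤ n := fun e => by
          have := Finset.card_le_univ (Fam e); simpa using this
        have hsub : Fintype.card (Fin n × G.edgeSet) - ∑ e, (Fam e).card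
            = ∑ e, (n - (Fam e).card) := by
          have hadd : ∑ e, ((n - (Fam e).card) + (Fam e).card) = ∑ _e : G.edgeSet, n :=
            Finset.sum_congr rfl fun e _ => Nat.sub_add_cancel (hle e)
          rw [Finset.sum_add_distrib] at hadd
          have hNN : (∑ _e : G.edgeSet, n) = Fintype.card (Fin n × G.edgeSet) := by
            simp [Fintype.card_prod, mul_comm]
          exact Nat.sub_eq_of_eq_add (by rw [← hNN, ← hadd])
        have hinner : ∀ (i : Fin n × {u : V // u ≠ v0}), (∑ j ∈ pairFinset Fam,
            (if ((i.2 : V)) = tail j.2 then (1 : ZMod (n + 1))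
              else if ((i.2 : V)) = head j.2 then -1 else 0))
            = ∑ e, ((Fam e).card : ZMod (n + 1)) * Mfull G tail head (i.2 : V) e := by
          intro i
          rw [sum_pairFinset Fam]
          refine Finset.sum_congr rfl fun e _ => ?_
          rw [Finset.sum_congr rfl fun g _ => hM i.2 e, Finset.sum_const, nsmul_eq_mul]
        rw [card_pairFinset, hsub, ← Finset.prod_pow_eq_pow_sum,
          Finset.prod_congr rfl (fun i _ => hinner i), Fintype.prod_prod_type]
        dsimp only
        rw [Finset.prod_const, Finset.card_univ, Fintype.card_fin, ← Finset.prod_pow]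
    _ = ∑ z : G.edgeSet → ZMod (n + 1),
          ∑ Fam ∈ univ.filter (fun Fam : G.edgeSet → Finset (Fin n) =>
            (fun e => (((Fam e).card : ZMod (n + 1)))) = z),
          (∏ e, (-1 : ZMod (n + 1)) ^ (n - (Fam e).card)) *
          ∏ u : {u : V // u ≠ v0},
            (∑ e, ((Fam e).card : ZMod (n + 1)) * Mfull G tail head (u : V) e) ^ n :=
        (Finset.sum_fiberwise univ _ _).symm
    _ = ∑ z : G.edgeSet → ZMod (n + 1),
          ∏ u : {u : V // u ≠ v0},
            (∑ e, z e * Mfull G tail head (u : V) e) ^ n := by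
        refine Finset.sum_congr rfl fun z _ => ?_
        have hrepl : ∀ Fam ∈ univ.filter (fun Fam : G.edgeSet → Finset (Fin n) =>
            (fun e => (((Fam e).card : ZMod (n + 1)))) = z),
            (∏ e, (-1 : ZMod (n + 1)) ^ (n - (Fam e).card)) *
            (∏ u : {u : V // u ≠ v0},
              (∑ e, ((Fam e).card : ZMod (n + 1)) * Mfull G tail head (u : V) e) ^ n)
            = (∏ e, (-1 : ZMod (n + 1)) ^ (n - (Fam e).card)) *
              (∏ u : {u : V // u ≠ v0},
                (∑ e, z e * Mfull G tail head (u : V) e) ^ n) := by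
          intro Fam hFam
          rw [Finset.mem_filter] at hFam
          have hz := hFam.2
          congr 1
          refine Finset.prod_congr rfl fun u _ => ?_
          congr 1
          refine Finset.sum_congr rfl fun e _ => ?_
          rw [← congrFun hz e]
        rw [Finset.sum_congr rfl hrepl, ← Finset.sum_mul]
        have hfil : univ.filter (fun Fam : G.edgeSet → Finset (Fin n) =>
            (fun e => (((Fam e).card : ZMod (n + 1)))) = z)
            = Fintype.piFinset (fun e => univ.filter
                (fun A : Finset (Fin n) => ((A.card : ZMod (n + 1)) = z e))) := by
          ext Fam
          simp [Fintype.mem_piFinset, funext_iff]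
        rw [hfil]
        rw [← Finset.prod_univ_sum (fun e : G.edgeSet => univ.filter
            (fun A : Finset (Fin n) => ((A.card : ZMod (n + 1)) = z e)))
          (fun e A => ((-1 : ZMod (n + 1))) ^ (n - A.card))]
        rw [Finset.prod_congr rfl fun e _ => coord_sum hp (z e)]
        simp
    _ = ∑ z : G.edgeSet → ZMod (n + 1),
          (if (∀ u : {u : V // u ≠ v0},
            (∑ e, z e * Mfull G tail head (u : V) e) ≠ 0) then 1 else 0) := by
        refine Finset.sum_congr rfl fun z _ => ?_
        by_cases hz : ∀ u : {u : V // u ≠ v0},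
            (∑ e, z e * Mfull G tail head (u : V) e) ≠ 0
        · rw [if_pos hz]
          refine Finset.prod_eq_one fun u _ => ?_
          have := ZMod.pow_card_sub_one_eq_one (hz u)
          simpa using this
        · rw [if_neg hz]
          push_neg at hz
          obtain ⟨u, hu⟩ := hz
          refine Finset.prod_eq_zero (Finset.mem_univ u) ?_
          rw [hu]
          exact zero_pow (Nat.one_le_iff_ne_zero.mp hn1)
    _ = (-1) ^ (Fintype.card V - 1) := by
        rw [Finset.sum_boole, ← Fintype.card_subtype, hcnt]
        push_cast
        have hneg : ((n : ZMod (n + 1))) = -1 := by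
          have h5 := ZMod.natCast_self (n + 1)
          push_cast at h5
          linear_combination h5
        rw [hneg]
/-- For a prime `p = n+1` and a tree `T` with at least two vertices, with reduced signed
incidence matrix `M_T` obtained by deleting the row of a chosen leaf vertex, the
permanent of `1_n ⊗ M_T` is congruent to `(−1)^{|V(T)|−1}` modulo `p`. -/
theorem tree_graph_permanent {V : Type*} [Fintype V] [DecidableEq V]
    (G : SimpleGraph V) [DecidableRel G.Adj] [Fintype G.edgeSet]
    (hT : G.IsTree) (hV : 2 ≤ Fintype.card V)
    (n : ℕ) (hp : Nat.Prime (n + 1))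
    (tail head : G.edgeSet → V)
    (hor : ∀ e : G.edgeSet, (e : Sym2 V) = s(tail e, head e))
    (v0 : V) (hleaf : G.degree v0 = 1) :
    permB (Matrix.of fun (p : Fin n × {u : V // u ≠ v0}) (q : Fin n × G.edgeSet) =>
        (if (p.2 : V) = tail q.2 then (1 : ℤ)
          else if (p.2 : V) = head q.2 then -1 else 0)) ≡
      (-1) ^ (Fintype.card V - 1) [ZMOD (n + 1)] := by
  have hmod : ((n : ℤ) + 1) = ((n + 1 : ℕ) : ℤ) := by push_cast; ring
  rw [hmod, ← ZMod.intCast_eq_intCast_iff]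
  have hL : ((permB (Matrix.of fun (p : Fin n × {u : V // u ≠ v0}) (q : Fin n × G.edgeSet) =>
        (if (p.2 : V) = tail q.2 then (1 : ℤ)
          else if (p.2 : V) = head q.2 then -1 else 0)) : ℤ) : ZMod (n + 1))
      = permB (Matrix.of fun (p : Fin n × {u : V // u ≠ v0}) (q : Fin n × G.edgeSet) =>
        (if (p.2 : V) = tail q.2 then (1 : ZMod (n + 1))
          else if (p.2 : V) = head q.2 then -1 else 0)) := by
    simp only [permB, Int.cast_sum, Int.cast_prod, Matrix.of_apply]
    refine Finset.sum_congr rfl fun σ _ => Finset.prod_congr rfl fun i _ => ?_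
    split_ifs <;> simp
  rw [hL, main_aux G hT n hp tail head hor v0]
  push_cast
  rfl
end
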